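/- arXiv:1509.04111 — 8 statements merged into one kernel-verified Lean document; each statement's English description precedes it below -/
import Mathlib

section
/- Let ψ be a solution of the scalar sojourn-time recursion. Then for all n ≥ 1 and all m with 0 ≤ m < K, ψ(n,m) = B_s(n+m, K−m)·(μ1/(μ1+s))^n + Σ_{k=m}^{K−1} a_s(n+k)·B_s(n+m, k−m)·ψ(n−1,k). -/
/-! Dividing the balance equation at `(n, m)` by its total rate turns it into the first-order
recurrence `ψ(n,m) = a_s(n+m) ψ(n-1,m) + b_s(n+m) ψ(n,m+1)` in `m`; unrolling it from `m` up to the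
boundary `K`, where `ψ(n,K) = (μ1/(μ1+s))^n`, gives the formula, with `B_s` the accumulated
products of the `b_s`. -/

noncomputable def aS (lam mu0 mu1 s : ℝ) (K k : ℕ) : ℝ :=
  if k ≤ K then mu0 / (lam + mu0 + s) else mu1 / (lam + mu1 + s)

noncomputable def bS (lam mu0 mu1 s : ℝ) (K k : ℕ) : ℝ :=
  if k ≤ K then lam / (lam + mu0 + s) else lam / (lam + mu1 + s)

noncomputable def BS (lam mu0 mu1 s : ℝ) (K k : ℕ) : ℕ → ℝ
  | 0 => 1
  | h + 1 => BS lam mu0 mu1 s K k h * bS lam mu0 mu1 s K (k + h)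

theorem eq_prod_mul_add_sum_of_recurrence {R : Type*} [CommRing R] (x y a b : ℕ → R) {m K : ℕ}
    (hmK : m ≤ K) (hrec : ∀ j, m ≤ j → j < K → x j = a j * y j + b j * x (j + 1)) :
    x m = (∏ j ∈ Finset.Ico m K, b j) * x K +
      ∑ k ∈ Finset.Ico m K, a k * (∏ j ∈ Finset.Ico m k, b j) * y k := by
  induction hmK using Nat.decreasingInduction with
  | self => simp
  | of_succ m hmK ih =>
    have htail : ∑ k ∈ Finset.Ico (m + 1) K, a k * (∏ j ∈ Finset.Ico m k, b j) * y k =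
        b m * ∑ k ∈ Finset.Ico (m + 1) K, a k * (∏ j ∈ Finset.Ico (m + 1) k, b j) * y k := by
      rw [Finset.mul_sum]
      refine Finset.sum_congr rfl fun k hk => ?_
      rw [Finset.prod_eq_prod_Ico_succ_bot (Finset.mem_Ico.mp hk).1]
      ring
    rw [hrec m le_rfl hmK, ih fun j hj hjK => hrec j (by omega) hjK,
      Finset.prod_eq_prod_Ico_succ_bot hmK, Finset.sum_eq_sum_Ico_succ_bot hmK, htail,
      Finset.Ico_self, Finset.prod_empty]
    ring

theorem BS_eq_prod_range (lam mu0 mu1 s : ℝ) (K k h : ℕ) :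
    BS lam mu0 mu1 s K k h = ∏ i ∈ Finset.range h, bS lam mu0 mu1 s K (k + i) := by
  induction h with
  | zero => rfl
  | succ h ih => rw [BS, ih, Finset.prod_range_succ]

theorem BS_eq_prod_Ico (lam mu0 mu1 s : ℝ) (K c m k : ℕ) :
    BS lam mu0 mu1 s K (c + m) (k - m) = ∏ j ∈ Finset.Ico m k, bS lam mu0 mu1 s K (c + j) := by
  simp only [BS_eq_prod_range, Finset.prod_Ico_eq_prod_range, add_assoc]

theorem eq_div_mul_add_div_mul {c u v x y z : ℝ} (hc : c ≠ 0) (h : c * x = u * y + v * z) :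
    x = u / c * y + v / c * z := by
  field_simp
  linear_combination h

theorem statement0_general (lam mu0 mu1 s : ℝ) (K : ℕ)
    (hlam : 0 < lam) (hmu0 : 0 < mu0) (hmu1 : 0 < mu1) (hs : 0 < s)
    (ψ : ℕ → ℕ → ℝ)
    (hle : ∀ n m, 1 ≤ n → n + m ≤ K →
      (lam + mu0 + s) * ψ n m = mu0 * ψ (n - 1) m + lam * ψ n (m + 1))
    (hgt : ∀ n m, 1 ≤ n → K < n + m →
      (lam + mu1 + s) * ψ n m = mu1 * ψ (n - 1) m + lam * ψ n (m + 1))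
    (hhi : ∀ n m, K ≤ m → ψ n m = (mu1 / (mu1 + s)) ^ n) :
    ∀ n m, 1 ≤ n → m < K →
      ψ n m = BS lam mu0 mu1 s K (n + m) (K - m) * (mu1 / (mu1 + s)) ^ n +
        ∑ k ∈ Finset.Icc m (K - 1),
          aS lam mu0 mu1 s K (n + k) * BS lam mu0 mu1 s K (n + m) (k - m) * ψ (n - 1) k := by
  intro n m hn hm
  have hstep : ∀ j, ψ n j =
      aS lam mu0 mu1 s K (n + j) * ψ (n - 1) j + bS lam mu0 mu1 s K (n + j) * ψ n (j + 1) := by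
    intro j
    unfold aS bS
    split_ifs with hj
    · exact eq_div_mul_add_div_mul (by positivity) (hle n j hn hj)
    · exact eq_div_mul_add_div_mul (by positivity) (hgt n j hn (by omega))
  have hIcc : Finset.Icc m (K - 1) = Finset.Ico m K := by
    ext k
    simp only [Finset.mem_Icc, Finset.mem_Ico]
    omega
  rw [eq_prod_mul_add_sum_of_recurrence (ψ n) (ψ (n - 1)) (fun j => aS lam mu0 mu1 s K (n + j))
      (fun j => bS lam mu0 mu1 s K (n + j)) hm.le (fun j _ _ => hstep j),
    hhi n K le_rfl, hIcc]
  simp only [BS_eq_prod_Ico]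

/-- the recursive formula for ψ(n,m), Lemma 2.1 of the paper. -/
theorem statement0 (lam mu0 mu1 s : ℝ) (K : ℕ)
    (hlam : 0 < lam) (hmu0 : 0 < mu0) (hmu1 : 0 < mu1) (hs : 0 < s) (hK : 1 ≤ K)
    (ψ : ℕ → ℕ → ℝ)
    (h0 : ∀ m, ψ 0 m = 1)
    (hle : ∀ n m, 1 ≤ n → n + m ≤ K →
      (lam + mu0 + s) * ψ n m = mu0 * ψ (n - 1) m + lam * ψ n (m + 1))
    (hgt : ∀ n m, 1 ≤ n → K < n + m →
      (lam + mu1 + s) * ψ n m = mu1 * ψ (n - 1) m + lam * ψ n (m + 1))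
    (hhi : ∀ n m, K ≤ m → ψ n m = (mu1 / (mu1 + s)) ^ n) :
    ∀ n m, 1 ≤ n → m < K →
      ψ n m = BS lam mu0 mu1 s K (n + m) (K - m) * (mu1 / (mu1 + s)) ^ n +
        ∑ k ∈ Finset.Icc m (K - 1),
          aS lam mu0 mu1 s K (n + k) * BS lam mu0 mu1 s K (n + m) (k - m) * ψ (n - 1) k :=
  statement0_general lam mu0 mu1 s K hlam hmu0 hmu1 hs ψ hle hgt hhi
end

section
/- Let ψ be a solution of the scalar sojourn-time recursion with 0 ≤ ψ(n,m) ≤ 1 for all n, m, and let z be a real number with |z| < 1. Define φ(z,m) = Σ_{h=0}^∞ ψ(K+h+1,m)·z^h. Then for every m ≥ 0 this series converges and (λ+μ1·(1−z)+s)·φ(z,m) = μ1·ψ(K,m) + λ·φ(z,m+1). -/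
/-!
Above level `K` the recursion `(λ+μ1+s) ψ(n,m) = μ1 ψ(n-1,m) + λ ψ(n,m+1)` is a first-order
recurrence in `n`. Multiplying it by `z^h` and summing turns the shift `n ↦ n-1` into a factor
`z` (plus the boundary term `ψ(K,m)`), and the series converge since `ψ` is bounded and `|z| < 1`.
-/

theorem summable_mul_pow_of_norm_le {𝕜 : Type*} [NormedField 𝕜] [CompleteSpace 𝕜]
    {a : ℕ → 𝕜} {C : ℝ} (ha : ∀ h, ‖a h‖ ≤ C) {z : 𝕜} (hz : ‖z‖ < 1) :
    Summable fun h => a h * z ^ h :=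
  ((summable_geometric_of_lt_one (norm_nonneg z) hz).mul_left C).of_norm_bounded fun h => by
    rw [norm_mul, norm_pow]
    exact mul_le_mul_of_nonneg_right (ha h) (by positivity)

theorem tsum_shift_mul_pow_of_recurrence {R : Type*} [CommRing R] [TopologicalSpace R]
    [IsTopologicalRing R] [T2Space R] {a b c z : R} {x y : ℕ → R}
    (hrec : ∀ h, a * x (h + 1) = b * x h + c * y (h + 1))
    (hx : Summable fun h => x (h + 1) * z ^ h) (hy : Summable fun h => y (h + 1) * z ^ h) :
    (a - b * z) * ∑' h, x (h + 1) * z ^ h = b * x 0 + c * ∑' h, y (h + 1) * z ^ h := by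
  have hx₀ : Summable fun h => x h * z ^ h :=
    (summable_nat_add_iff (f := fun h => x h * z ^ h) 1).1 <|
      (hx.mul_left z).congr fun h => by ring
  have hshift : ∑' h, x h * z ^ h = x 0 + z * ∑' h, x (h + 1) * z ^ h := by
    rw [hx₀.tsum_eq_zero_add, ← hx.tsum_mul_left]
    simp only [pow_zero, mul_one]
    exact congrArg _ (tsum_congr fun h => by ring)
  have hsum : a * ∑' h, x (h + 1) * z ^ h
      = b * ∑' h, x h * z ^ h + c * ∑' h, y (h + 1) * z ^ h := by
    rw [← hx.tsum_mul_left, ← hx₀.tsum_mul_left, ← hy.tsum_mul_left,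
      ← (hx₀.mul_left b).tsum_add (hy.mul_left c)]
    exact tsum_congr fun h => by linear_combination z ^ h * hrec h
  linear_combination hsum + b * hshift

theorem statement3_general (lam mu1 s : ℝ) (K : ℕ)
    (ψ : ℕ → ℕ → ℝ)
    (hgt : ∀ n m, 1 ≤ n → K < n + m →
      (lam + mu1 + s) * ψ n m = mu1 * ψ (n - 1) m + lam * ψ n (m + 1))
    (hbd : ∀ n m, 0 ≤ ψ n m ∧ ψ n m ≤ 1)
    (z : ℝ) (hz : |z| < 1) :
    ∀ m : ℕ,
      Summable (fun h : ℕ => ψ (K + h + 1) m * z ^ h) ∧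
      (lam + mu1 * (1 - z) + s) * (∑' h : ℕ, ψ (K + h + 1) m * z ^ h) =
        mu1 * ψ K m + lam * ∑' h : ℕ, ψ (K + h + 1) (m + 1) * z ^ h := by
  have hsummable (n : ℕ → ℕ) (m : ℕ) : Summable fun h => ψ (n h) m * z ^ h :=
    summable_mul_pow_of_norm_le (C := 1)
      (fun h => (abs_of_nonneg (hbd (n h) m).1).trans_le (hbd (n h) m).2) hz
  intro m
  have hrec (h : ℕ) : (lam + mu1 + s) * ψ (K + h + 1) m
      = mu1 * ψ (K + h) m + lam * ψ (K + h + 1) (m + 1) :=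
    hgt (K + h + 1) m (by omega) (by omega)
  refine ⟨hsummable (K + · + 1) m, ?_⟩
  rw [show lam + mu1 * (1 - z) + s = lam + mu1 + s - mu1 * z by ring]
  exact tsum_shift_mul_pow_of_recurrence
    (x := fun h => ψ (K + h) m) (y := fun h => ψ (K + h) (m + 1)) hrec
    (hsummable (K + · + 1) m) (hsummable (K + · + 1) (m + 1))

/-- the z-transform φ(z,m) converges and satisfies the recursive relation
(λ + μ1(1−z) + s)·φ(z,m) = μ1·ψ(K,m) + λ·φ(z,m+1). -/
theorem statement3 (lam mu0 mu1 s : ℝ) (K : ℕ)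
    (hlam : 0 < lam) (hmu0 : 0 < mu0) (hmu1 : 0 < mu1) (hs : 0 < s) (hK : 1 ≤ K)
    (ψ : ℕ → ℕ → ℝ)
    (h0 : ∀ m, ψ 0 m = 1)
    (hle : ∀ n m, 1 ≤ n → n + m ≤ K →
      (lam + mu0 + s) * ψ n m = mu0 * ψ (n - 1) m + lam * ψ n (m + 1))
    (hgt : ∀ n m, 1 ≤ n → K < n + m →
      (lam + mu1 + s) * ψ n m = mu1 * ψ (n - 1) m + lam * ψ n (m + 1))
    (hhi : ∀ n m, K ≤ m → ψ n m = (mu1 / (mu1 + s)) ^ n)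
    (hbd : ∀ n m, 0 ≤ ψ n m ∧ ψ n m ≤ 1)
    (z : ℝ) (hz : |z| < 1) :
    ∀ m : ℕ,
      Summable (fun h : ℕ => ψ (K + h + 1) m * z ^ h) ∧
      (lam + mu1 * (1 - z) + s) * (∑' h : ℕ, ψ (K + h + 1) m * z ^ h) =
        mu1 * ψ K m + lam * ∑' h : ℕ, ψ (K + h + 1) (m + 1) * z ^ h :=
  statement3_general lam mu1 s K ψ hgt hbd z hz
end

section
/- Assume additionally λ < μ1. Let ψ be a solution of the scalar sojourn-time recursion with 0 ≤ ψ(n,m) ≤ 1 for all n, m, and define φ(z,m) = Σ_{h=0}^∞ ψ(K+h+1,m)·z^h for 0 ≤ z < 1. Then for every m with 0 ≤ m ≤ K, φ(λ/μ1, m) = Σ_{h=0}^{K−1−m} (λ/μ1)^h·(μ1/(μ1+s))^{h+1}·ψ(K,m+h) + (μ1/(μ1−λ+s))·(λ/μ1)^{K−m}·(μ1/(μ1+s))^{2K−m}. -/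
/-!
Put `z = λ/μ1`, `a = μ1/(μ1+s)` and `φ m = Σ_h ψ(K+h+1,m) z^h`. Every `ψ(K+h+1,m)` lies in the
region `n + m > K`, so multiplying that recursion by `z^h` and summing gives the first-order
recursion `φ m = a ψ(K,m) + z a φ(m+1)`, valid for every `m`. On the boundary `m = K` the values
`ψ(n,K) = a^n` make `φ K` a geometric series, and unrolling the recursion `K - m` times from `m`
to `K` gives the formula.
-/

open Finset

/-- The paper's `φ(z, m)`. -/
noncomputable def tailGF (ψ : ℕ → ℕ → ℝ) (K : ℕ) (z : ℝ) (m : ℕ) : ℝ :=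
  ∑' h : ℕ, ψ (K + h + 1) m * z ^ h

lemma eq_sum_add_pow_mul_of_eq_add_mul {R : Type*} [CommSemiring R] {φ c : ℕ → R} {r : R}
    (hφ : ∀ m, φ m = c m + r * φ (m + 1)) (m j : ℕ) :
    φ m = ∑ i ∈ range j, r ^ i * c (m + i) + r ^ j * φ (m + j) := by
  induction j generalizing m with
  | zero => simp
  | succ j ih =>
    have hidx : ∀ i, m + 1 + i = m + (i + 1) := fun i => by omega
    rw [hφ m, ih (m + 1), sum_range_succ', mul_add, mul_sum]
    simp only [hidx, pow_succ', pow_zero, one_mul, add_zero, mul_assoc]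
    ring

lemma summable_mul_pow_of_mem_Icc {f : ℕ → ℝ} (hf : ∀ n, 0 ≤ f n ∧ f n ≤ 1) {z : ℝ}
    (hz0 : 0 ≤ z) (hz1 : z < 1) : Summable fun n => f n * z ^ n :=
  (summable_geometric_of_lt_one hz0 hz1).of_nonneg_of_le
    (fun n => mul_nonneg (hf n).1 (pow_nonneg hz0 n))
    (fun n => mul_le_of_le_one_left (pow_nonneg hz0 n) (hf n).2)

lemma tsum_mul_pow_eq_add {f : ℕ → ℝ} {z : ℝ} (hf : Summable fun n => f n * z ^ n) :
    ∑' n, f n * z ^ n = f 0 + z * ∑' n, f (n + 1) * z ^ n := by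
  rw [hf.tsum_eq_zero_add, ← tsum_mul_left]
  simp only [pow_zero, mul_one, pow_succ']
  congr 1
  exact tsum_congr fun n => by ring

section

variable {lam mu1 s : ℝ} {K : ℕ} {ψ : ℕ → ℕ → ℝ}

lemma tailGF_recursion (hmu1 : mu1 ≠ 0) (hms : mu1 + s ≠ 0)
    (hgt : ∀ n m, 1 ≤ n → K < n + m →
      (lam + mu1 + s) * ψ n m = mu1 * ψ (n - 1) m + lam * ψ n (m + 1))
    (hsum : ∀ n m, Summable fun h : ℕ => ψ (n + h) m * (lam / mu1) ^ h) (m : ℕ) :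
    tailGF ψ K (lam / mu1) m = mu1 / (mu1 + s) * ψ K m +
      lam / mu1 * (mu1 / (mu1 + s)) * tailGF ψ K (lam / mu1) (m + 1) := by
  set z := lam / mu1
  have hmuz : mu1 * z = lam := mul_div_cancel₀ lam hmu1
  have hgt' : ∀ h, (lam + mu1 + s) * (ψ (K + h + 1) m * z ^ h) =
      mu1 * (ψ (K + h) m * z ^ h) + lam * (ψ (K + h + 1) (m + 1) * z ^ h) := fun h => by
    have := hgt (K + h + 1) m (by omega) (by omega)
    rw [Nat.add_sub_cancel] at this
    linear_combination z ^ h * this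
  have hshift : ∑' h, ψ (K + h) m * z ^ h = ψ K m + z * tailGF ψ K z m :=
    tsum_mul_pow_eq_add (hsum K m)
  have hsum' : ∀ m, Summable fun h : ℕ => ψ (K + h + 1) m * z ^ h := fun m => by
    simpa only [add_right_comm] using hsum (K + 1) m
  have hsummed : (lam + mu1 + s) * tailGF ψ K z m =
      mu1 * ∑' h, ψ (K + h) m * z ^ h + lam * tailGF ψ K z (m + 1) := by
    rw [tailGF, tailGF, ← tsum_mul_left, tsum_congr hgt', ← tsum_mul_left, ← tsum_mul_left]
    exact ((hsum K m).mul_left mu1).tsum_add ((hsum' (m + 1)).mul_left lam)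
  rw [hshift, ← hmuz] at hsummed
  field_simp
  linear_combination hsummed

lemma tailGF_boundary (hmu1 : 0 < mu1) (hlam : 0 ≤ lam) (hlt : lam < mu1 + s)
    (hhi : ∀ n, ψ n K = (mu1 / (mu1 + s)) ^ n) :
    tailGF ψ K (lam / mu1) K = mu1 / (mu1 - lam + s) * (mu1 / (mu1 + s)) ^ K := by
  have hms : 0 < mu1 + s := by linarith
  set a := mu1 / (mu1 + s) with ha
  have haz : a * (lam / mu1) = lam / (mu1 + s) := by rw [ha]; field_simp
  have hterm : ∀ h, ψ (K + h + 1) K * (lam / mu1) ^ h = a ^ (K + 1) * (a * (lam / mu1)) ^ h :=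
    fun h => by rw [hhi, mul_pow]; ring
  rw [tailGF, tsum_congr hterm, tsum_mul_left, haz,
    tsum_geometric_of_lt_one (div_nonneg hlam hms.le) ((div_lt_one hms).2 hlt),
    pow_succ, mul_assoc, mul_comm]
  congr 1
  rw [ha, one_sub_div hms.ne', inv_div, sub_add_eq_add_sub, add_sub_right_comm]
  field_simp

end

theorem statement5_general (lam mu1 s : ℝ) (K : ℕ)
    (hlam : 0 < lam) (hmu1 : 0 < mu1) (hs : 0 < s)
    (hstab : lam < mu1)
    (ψ : ℕ → ℕ → ℝ)
    (hgt : ∀ n m, 1 ≤ n → K < n + m →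
      (lam + mu1 + s) * ψ n m = mu1 * ψ (n - 1) m + lam * ψ n (m + 1))
    (hhi : ∀ n m, K ≤ m → ψ n m = (mu1 / (mu1 + s)) ^ n)
    (hbd : ∀ n m, 0 ≤ ψ n m ∧ ψ n m ≤ 1) :
    ∀ m : ℕ, m ≤ K →
      (∑' h : ℕ, ψ (K + h + 1) m * (lam / mu1) ^ h) =
        (∑ h ∈ Finset.range (K - m),
          (lam / mu1) ^ h * (mu1 / (mu1 + s)) ^ (h + 1) * ψ K (m + h)) +
        mu1 / (mu1 - lam + s) * (lam / mu1) ^ (K - m) * (mu1 / (mu1 + s)) ^ (2 * K - m) := by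
  intro m hm
  have hsum : ∀ n m, Summable fun h : ℕ => ψ (n + h) m * (lam / mu1) ^ h := fun n m =>
    summable_mul_pow_of_mem_Icc (fun h => hbd (n + h) m) (div_pos hlam hmu1).le
      ((div_lt_one hmu1).2 hstab)
  have hunrolled := eq_sum_add_pow_mul_of_eq_add_mul
    (tailGF_recursion hmu1.ne' (by positivity) hgt hsum) m (K - m)
  rw [Nat.add_sub_cancel' hm, tailGF_boundary hmu1 hlam.le (by linarith) (hhi · K le_rfl)]
    at hunrolled
  rw [← tailGF, hunrolled, show 2 * K - m = (K - m) + K by omega]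
  congr 1
  · exact sum_congr rfl fun h _ => by ring
  · ring

/-- the value of φ(λ/μ1, m) for 0 ≤ m ≤ K. -/
theorem statement5 (lam mu0 mu1 s : ℝ) (K : ℕ)
    (hlam : 0 < lam) (hmu0 : 0 < mu0) (hmu1 : 0 < mu1) (hs : 0 < s) (hK : 1 ≤ K)
    (hstab : lam < mu1)
    (ψ : ℕ → ℕ → ℝ)
    (h0 : ∀ m, ψ 0 m = 1)
    (hle : ∀ n m, 1 ≤ n → n + m ≤ K →
      (lam + mu0 + s) * ψ n m = mu0 * ψ (n - 1) m + lam * ψ n (m + 1))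
    (hgt : ∀ n m, 1 ≤ n → K < n + m →
      (lam + mu1 + s) * ψ n m = mu1 * ψ (n - 1) m + lam * ψ n (m + 1))
    (hhi : ∀ n m, K ≤ m → ψ n m = (mu1 / (mu1 + s)) ^ n)
    (hbd : ∀ n m, 0 ≤ ψ n m ∧ ψ n m ≤ 1) :
    ∀ m : ℕ, m ≤ K →
      (∑' h : ℕ, ψ (K + h + 1) m * (lam / mu1) ^ h) =
        (∑ h ∈ Finset.range (K - m),
          (lam / mu1) ^ h * (mu1 / (mu1 + s)) ^ (h + 1) * ψ K (m + h)) +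
        mu1 / (mu1 - lam + s) * (lam / mu1) ^ (K - m) * (mu1 / (mu1 + s)) ^ (2 * K - m) :=
  statement5_general lam mu1 s K hlam hmu1 hs hstab ψ hgt hhi hbd
end

section
/- Let R00 = (μ0+γ+λ)/(2μ0) − sqrt( ((μ0+γ+λ)/(2μ0))^2 − λ/μ0 ) and let R be the 2×2 real matrix with entries R(0,0) = R00, R(0,1) = 0, R(1,0) = (γ/μ1)·R00/(1−R00), R(1,1) = λ/μ1. Then R satisfies the matrix equation Λ − H3·R + M·R^2 = 0, where Λ = diag(λ,λ), M = diag(μ0,μ1), Γ3 is the 2×2 matrix with rows (γ,0) and (−γ,0), and H3 = M + Λ + Γ3. -/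
/-!
The equation is lower triangular. Its (0,0) entry is the scalar quadratic
`μ0 x² - (μ0 + γ + λ) x + λ = 0`, of which `R00` is the smaller root; its (1,1) entry holds
because `λ/μ1` is a root of `μ1 x² - (μ1 + λ) x + λ`; and its (1,0) entry reduces to
`γ R00 = μ1 R(1,0) (1 - R00)`, which is exactly how `R(1,0)` is chosen. The discriminant is
nonnegative because `(μ0 + γ + λ)² - 4 λ μ0 = (μ0 - λ + γ)² + 4 λ γ`, and `R00 ≠ 1` because the
quadratic takes the value `-γ` at `1`.
-/

lemma quadratic_eq_zero_of_eq_sub_sqrt {a b c x : ℝ} (ha : a ≠ 0)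
    (hdisc : c / a ≤ (b / (2 * a)) ^ 2)
    (hx : x = b / (2 * a) - Real.sqrt ((b / (2 * a)) ^ 2 - c / a)) :
    a * x ^ 2 - b * x + c = 0 := by
  have hsq := Real.sq_sqrt (sub_nonneg.mpr hdisc)
  rw [hx]
  linear_combination (norm := skip) a * hsq
  field_simp
  ring

lemma div_le_sq_add_add_div_two_mul {lam mu gam : ℝ} (hlam : 0 ≤ lam) (hmu : 0 < mu) (hgam : 0 ≤ gam) :
    lam / mu ≤ ((mu + gam + lam) / (2 * mu)) ^ 2 := by
  rw [div_pow, div_le_div_iff₀ hmu (by positivity)]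
  nlinarith [sq_nonneg (mu - lam + gam), mul_nonneg hlam hgam, hmu.le]

lemma quadratic_matrix_eq_zero {lam mu0 mu1 gam r : ℝ} (hmu1 : mu1 ≠ 0) (hgam : gam ≠ 0)
    (hr : mu0 * r ^ 2 - (mu0 + gam + lam) * r + lam = 0) :
    !![lam, 0; 0, lam] - (!![mu0, 0; 0, mu1] + !![lam, 0; 0, lam] + !![gam, 0; -gam, 0]) *
        !![r, 0; gam / mu1 * (r / (1 - r)), lam / mu1] +
      !![mu0, 0; 0, mu1] * !![r, 0; gam / mu1 * (r / (1 - r)), lam / mu1] ^ 2 = 0 := by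
  have hr1 : 1 - r ≠ 0 := by
    intro h
    obtain rfl : r = 1 := by linarith
    exact hgam (by linarith)
  ext i j
  fin_cases i <;> fin_cases j <;> simp [pow_two]
  · linear_combination hr
  all_goals field_simp; ring

/-- the matrix R solves the quadratic matrix equation Λ − H3·R + M·R² = 0. -/
theorem statement9 (lam mu0 mu1 gam : ℝ)
    (hlam : 0 < lam) (hmu0 : 0 < mu0) (hmu1 : 0 < mu1) (hgam : 0 < gam)
    (R00 : ℝ)
    (hR00 : R00 = (mu0 + gam + lam) / (2 * mu0) -
      Real.sqrt (((mu0 + gam + lam) / (2 * mu0)) ^ 2 - lam / mu0))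
    (R Lam M G3 H3 : Matrix (Fin 2) (Fin 2) ℝ)
    (hR : R = !![R00, 0; gam / mu1 * (R00 / (1 - R00)), lam / mu1])
    (hLam : Lam = !![lam, 0; 0, lam])
    (hM : M = !![mu0, 0; 0, mu1])
    (hG3 : G3 = !![gam, 0; -gam, 0])
    (hH3 : H3 = M + Lam + G3) :
    Lam - H3 * R + M * R ^ 2 = 0 := by
  have hroot : mu0 * R00 ^ 2 - (mu0 + gam + lam) * R00 + lam = 0 :=
    quadratic_eq_zero_of_eq_sub_sqrt hmu0.ne' (div_le_sq_add_add_div_two_mul hlam.le hmu0 hgam.le) hR00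
  subst hR hLam hM hG3 hH3
  exact quadratic_matrix_eq_zero hmu1.ne' hgam.ne' hroot
end

section
/- Assume additionally λ < μ1, and let R be the 2×2 real matrix with entries R(0,0) = R00, R(0,1) = 0, R(1,0) = (γ/μ1)·R00/(1−R00), R(1,1) = λ/μ1, where R00 = (μ0+γ+λ)/(2μ0) − sqrt( ((μ0+γ+λ)/(2μ0))^2 − λ/μ0 ). Then the eigenvalues of R are exactly R00 and λ/μ1, both lie in the open interval (0,1), the matrix I − R is invertible, and (I − R)^{−1} = Σ_{h=0}^∞ R^h. -/
/-!
`R` is lower triangular, so its eigenvalues are its diagonal entries, and `R00`, the smaller root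
of `μ0 x² - (μ0 + γ + λ) x + λ`, lies in `(0, 1)` because that quadratic is positive at `0` and
equal to `-γ < 0` at `1`. A lower-triangular matrix with diagonal entries in `(-1, 1)` is
conjugate, by `diag(1, s)` with `s` large, to one whose `L∞`-operator norm is below `1`, so its
Neumann series converges, and a convergent geometric series always sums to `(1 - R)⁻¹`.
-/

open scoped Matrix

theorem spectrum_lowerTriangular_fin_two {K : Type*} [Field K] (a c d : K) :
    spectrum K !![a, 0; c, d] = {a, d} := by
  ext x
  simp [spectrum.mem_iff, Matrix.isUnit_iff_isUnit_det, Matrix.det_fin_two,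
    Matrix.algebraMap_matrix_apply, sub_eq_zero, or_iff_not_imp_left]

theorem sub_sqrt_sq_sub_pos {b p : ℝ} (hb : 0 < b) (hp : 0 < p) : 0 < b - √(b ^ 2 - p) := by
  have : √(b ^ 2 - p) < b := (Real.sqrt_lt' hb).mpr (by linarith)
  linarith

theorem sub_sqrt_sq_sub_lt_one {b p : ℝ} (h : 1 + p < 2 * b) : b - √(b ^ 2 - p) < 1 := by
  have : b - 1 < √(b ^ 2 - p) := Real.lt_sqrt_of_sq_lt (by linarith)
  linarith

theorem Matrix.inv_one_sub_eq_tsum_pow {n α : Type*} [Fintype n] [DecidableEq n] [CommRing α]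
    [TopologicalSpace α] [IsTopologicalRing α] [T2Space α] {A : Matrix n n α}
    (h : Summable (A ^ ·)) :
    IsUnit (1 - A) ∧ (1 - A)⁻¹ = ∑' k : ℕ, A ^ k :=
  ⟨(Matrix.isUnit_iff_isUnit_det _).mpr (Matrix.isUnit_det_of_right_inverse h.one_sub_mul_tsum_pow),
    Matrix.inv_eq_right_inv h.one_sub_mul_tsum_pow⟩

theorem Summable.of_summable_pow_conj {α : Type*} [Ring α] [TopologicalSpace α]
    [IsTopologicalRing α] (u : αˣ) {x : α} (h : Summable ((↑u⁻¹ * x * ↑u : α) ^ ·)) :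
    Summable (x ^ ·) := by
  refine ((h.mul_left (u : α)).mul_right (↑u⁻¹ : α)).congr fun n => ?_
  rw [Units.conj_pow']
  simp [mul_assoc]

section LInftyNorm

attribute [local instance] Matrix.linftyOpNormedRing Matrix.linftyOpNormedAlgebra

theorem Matrix.linfty_opNorm_lowerTriangular_fin_two_lt_one {a c d : ℝ} (ha : |a| < 1)
    (hcd : |c| + |d| < 1) : ‖!![a, 0; c, d]‖ < 1 := by
  rw [Matrix.linfty_opNorm_def, show (1 : ℝ) = ((1 : NNReal) : ℝ) from rfl, NNReal.coe_lt_coe,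
    Finset.sup_lt_iff (by norm_num)]
  intro i _
  rw [← NNReal.coe_lt_coe]
  fin_cases i <;> simpa [Fin.sum_univ_two, Real.norm_eq_abs]

theorem summable_pow_lowerTriangular_fin_two {a c d : ℝ} (ha : |a| < 1) (hd : |d| < 1) :
    Summable (!![a, 0; c, d] ^ ·) := by
  have hd' : 0 < 1 - |d| := sub_pos.mpr hd
  set s : ℝ := (|c| + 1) / (1 - |d|)
  have hs : 0 < s := by positivity
  have hcs : |c / s| + |d| < 1 := by
    rw [abs_div, abs_of_pos hs, div_add' _ _ _ hs.ne', div_lt_one hs]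
    have : (1 - |d|) * s = |c| + 1 := mul_div_cancel₀ _ hd'.ne'
    linarith
  let u : (Matrix (Fin 2) (Fin 2) ℝ)ˣ :=
    ⟨!![1, 0; 0, s], !![1, 0; 0, s⁻¹], by simp [Matrix.one_fin_two, hs.ne'],
      by simp [Matrix.one_fin_two, hs.ne']⟩
  refine Summable.of_summable_pow_conj u (summable_geometric_of_norm_lt_one ?_)
  have hconj : ((u⁻¹ : (Matrix (Fin 2) (Fin 2) ℝ)ˣ) : Matrix (Fin 2) (Fin 2) ℝ) *
      !![a, 0; c, d] * u = !![a, 0; c / s, d] := by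
    simp only [u, Units.inv_mk, Matrix.mul_fin_two]
    simp [inv_mul_eq_div, hs.ne']
  rw [hconj]
  exact Matrix.linfty_opNorm_lowerTriangular_fin_two_lt_one ha hcs

end LInftyNorm

/-- the eigenvalues of R are exactly R00 and λ/μ1, both in (0,1),
I − R is invertible, and (I − R)⁻¹ = Σ_{h=0}^∞ R^h. -/
theorem statement10 (lam mu0 mu1 gam : ℝ)
    (hlam : 0 < lam) (hmu0 : 0 < mu0) (hmu1 : 0 < mu1) (hgam : 0 < gam)
    (hstab : lam < mu1)
    (R00 : ℝ)
    (hR00 : R00 = (mu0 + gam + lam) / (2 * mu0) -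
      Real.sqrt (((mu0 + gam + lam) / (2 * mu0)) ^ 2 - lam / mu0))
    (R : Matrix (Fin 2) (Fin 2) ℝ)
    (hR : R = !![R00, 0; gam / mu1 * (R00 / (1 - R00)), lam / mu1]) :
    spectrum ℝ R = {R00, lam / mu1} ∧
    (0 < R00 ∧ R00 < 1) ∧
    (0 < lam / mu1 ∧ lam / mu1 < 1) ∧
    IsUnit ((1 : Matrix (Fin 2) (Fin 2) ℝ) - R) ∧
    ((1 : Matrix (Fin 2) (Fin 2) ℝ) - R)⁻¹ = ∑' h : ℕ, R ^ h := by
  have hR00_mem : 0 < R00 ∧ R00 < 1 := by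
    rw [hR00]
    refine ⟨sub_sqrt_sq_sub_pos (by positivity) (by positivity), sub_sqrt_sq_sub_lt_one ?_⟩
    field_simp
    linarith
  have hratio_mem : 0 < lam / mu1 ∧ lam / mu1 < 1 := ⟨by positivity, (div_lt_one hmu1).mpr hstab⟩
  have abs_lt_one {x : ℝ} (hx : 0 < x ∧ x < 1) : |x| < 1 := abs_lt.mpr ⟨by linarith, hx.2⟩
  subst hR
  exact ⟨spectrum_lowerTriangular_fin_two _ _ _, hR00_mem, hratio_mem,
    Matrix.inv_one_sub_eq_tsum_pow <|
      summable_pow_lowerTriangular_fin_two (abs_lt_one hR00_mem) (abs_lt_one hratio_mem)⟩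
end

section
/- Let Z, A, B, T1, T2 be d×d complex matrices such that every eigenvalue of Z has modulus at most 1, every eigenvalue of B has modulus strictly less than 1, T1 and T2 are invertible, and every eigenvalue of T1 has modulus strictly less than 1. Then Σ_{h=0}^∞ S(T2·T1^h·Z·T1^{−h}·T2^{−1}, A, B) · T2·T1^h·Z^h = S(Z, A·T2·S(Z, I, T1), B), where all the series involved converge. -/
/-!
After conjugating back, the `h`-th term on the left is `∑ₖ Bᵏ (A T₂ T₁ʰ) Zᵏ Zʰ`, and the right-hand
side is the same double series summed in the other order. By Gelfand's formula, `ρ(B) < 1`,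
`ρ(T₁) < 1` and `ρ(Z) ≤ 1` make `‖Bⁿ‖ ‖Zⁿ‖` and `‖T₁ⁿ‖ ‖Zⁿ‖` decay geometrically, so the double
series converges absolutely and the two orders of summation agree.
-/

open Filter
open scoped NNReal ENNReal

section SpectralRadius

variable {𝔸 : Type*} [NormedRing 𝔸] [NormedAlgebra ℂ 𝔸]

lemma spectralRadius_le_one_of_forall_norm_le {a : 𝔸} (h : ∀ z ∈ spectrum ℂ a, ‖z‖ ≤ 1) :
    spectralRadius ℂ a ≤ 1 :=
  iSup₂_le fun z hz => by exact_mod_cast h z hz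

variable [CompleteSpace 𝔸]

lemma spectralRadius_lt_one_of_forall_norm_lt {a : 𝔸} (h : ∀ z ∈ spectrum ℂ a, ‖z‖ < 1) :
    spectralRadius ℂ a < 1 := by
  rcases (spectrum ℂ a).eq_empty_or_nonempty with hempty | hne
  · simp [spectralRadius, hempty]
  · exact_mod_cast spectrum.spectralRadius_lt_of_forall_lt_of_nonempty hne
      fun z hz => by exact_mod_cast h z hz

lemma eventually_norm_pow_le_of_spectralRadius_lt {a : 𝔸} {r : ℝ≥0}
    (h : spectralRadius ℂ a < r) : ∀ᶠ n in atTop, ‖a ^ n‖ ≤ (r : ℝ) ^ n := by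
  have hgelfand := spectrum.pow_nnnorm_pow_one_div_tendsto_nhds_spectralRadius a
  filter_upwards [hgelfand.eventually_lt_const h, eventually_gt_atTop 0] with n hn hn0
  rw [one_div, ENNReal.rpow_inv_lt_iff (by positivity), ENNReal.rpow_natCast] at hn
  exact_mod_cast hn.le

lemma summable_norm_pow_mul_norm_pow {a z : 𝔸} (ha : spectralRadius ℂ a < 1)
    (hz : spectralRadius ℂ z ≤ 1) : Summable fun n => ‖a ^ n‖ * ‖z ^ n‖ := by
  obtain ⟨r, har, hr1⟩ := ENNReal.lt_iff_exists_nnreal_btwn.mp ha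
  obtain ⟨q, hrq, hq1⟩ := exists_between (α := ℝ≥0) (by exact_mod_cast hr1)
  -- `ρ(a) < r < q < 1` and `ρ(z) ≤ 1 < q / r`, so the product decays like `qⁿ`.
  have hr0 : 0 < r := by exact_mod_cast zero_le.trans_lt har
  have hzq : spectralRadius ℂ z < ((q / r : ℝ≥0) : ℝ≥0∞) :=
    hz.trans_lt (by exact_mod_cast (one_lt_div hr0).mpr hrq)
  refine .of_norm_bounded_eventually_nat (summable_geometric_of_lt_one q.2 hq1) ?_
  filter_upwards [eventually_norm_pow_le_of_spectralRadius_lt har,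
    eventually_norm_pow_le_of_spectralRadius_lt hzq] with n han hzn
  calc ‖‖a ^ n‖ * ‖z ^ n‖‖ = ‖a ^ n‖ * ‖z ^ n‖ := by simp
    _ ≤ (r : ℝ) ^ n * ((q / r : ℝ≥0) : ℝ) ^ n := by gcongr
    _ = (q : ℝ) ^ n := by rw [← mul_pow, ← NNReal.coe_mul, mul_div_cancel₀ _ hr0.ne']

variable {b t z : 𝔸}

lemma summable_pow_mul_mul_pow (hb : spectralRadius ℂ b < 1) (hz : spectralRadius ℂ z ≤ 1)
    (x : 𝔸) : Summable fun n => b ^ n * x * z ^ n := by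
  refine .of_norm_bounded ((summable_norm_pow_mul_norm_pow hb hz).mul_left ‖x‖) fun n => ?_
  calc ‖b ^ n * x * z ^ n‖ ≤ ‖b ^ n‖ * ‖x‖ * ‖z ^ n‖ := norm_mul₃_le
    _ = ‖x‖ * (‖b ^ n‖ * ‖z ^ n‖) := by ring

lemma summable_prod_pow_mul_mul_pow_mul_pow (hb : spectralRadius ℂ b < 1)
    (ht : spectralRadius ℂ t < 1) (hz : spectralRadius ℂ z ≤ 1) (x : 𝔸) :
    Summable fun p : ℕ × ℕ => b ^ p.2 * (x * t ^ p.1) * z ^ p.2 * z ^ p.1 := by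
  have hprod := (summable_norm_pow_mul_norm_pow ht hz).mul_of_nonneg
    (summable_norm_pow_mul_norm_pow hb hz) (fun _ => by positivity) (fun _ => by positivity)
  refine .of_norm_bounded (hprod.mul_left ‖x‖) fun ⟨i, j⟩ => ?_
  calc ‖b ^ j * (x * t ^ i) * z ^ j * z ^ i‖
      ≤ ‖b ^ j‖ * (‖x‖ * ‖t ^ i‖) * ‖z ^ j‖ * ‖z ^ i‖ := by
        refine (norm_mul_le _ _).trans (mul_le_mul_of_nonneg_right ?_ (norm_nonneg _))
        refine norm_mul₃_le.trans ?_
        gcongr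
        exact norm_mul_le _ _
    _ = ‖x‖ * (‖t ^ i‖ * ‖z ^ i‖ * (‖b ^ j‖ * ‖z ^ j‖)) := by ring

lemma tsum_tsum_pow_mul_mul_pow_mul_pow (hb : spectralRadius ℂ b < 1)
    (ht : spectralRadius ℂ t < 1) (hz : spectralRadius ℂ z ≤ 1) (x : 𝔸) :
    ∑' i, ∑' j, b ^ j * (x * t ^ i) * z ^ j * z ^ i =
      ∑' j, b ^ j * (x * ∑' i, t ^ i * z ^ i) * z ^ j := by
  have hF : Summable (Function.uncurry fun i j => b ^ j * (x * t ^ i) * z ^ j * z ^ i) :=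
    summable_prod_pow_mul_mul_pow_mul_pow hb ht hz x
  refine hF.tsum_comm.symm.trans (tsum_congr fun j => ?_)
  have hs : Summable fun i => t ^ i * z ^ i := by
    simpa using summable_pow_mul_mul_pow ht hz 1
  rw [← hs.tsum_mul_left, ← (hs.mul_left x).tsum_mul_left,
    ← ((hs.mul_left x).mul_left _).tsum_mul_right]
  refine tsum_congr fun i => ?_
  simp only [mul_assoc, pow_mul_comm z i j]

end SpectralRadius

namespace Matrix

variable {n R : Type*} [Fintype n] [DecidableEq n] [CommRing R] {P : Matrix n n R}

lemma conj_pow (hP : IsUnit P) (Z : Matrix n n R) (k : ℕ) :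
    (P * Z * P⁻¹) ^ k = P * Z ^ k * P⁻¹ := by
  simpa [coe_units_inv] using Units.conj_pow hP.unit Z k

lemma pow_mul_mul_conj_pow (hP : IsUnit P) (B A Z : Matrix n n R) (k : ℕ) :
    B ^ k * A * (P * Z * P⁻¹) ^ k = B ^ k * (A * P) * Z ^ k * P⁻¹ := by
  rw [conj_pow hP]
  simp only [mul_assoc]

lemma tsum_pow_mul_mul_conj_pow_mul [TopologicalSpace R] [IsTopologicalRing R] [T2Space R]
    (hP : IsUnit P) {B A Z : Matrix n n R} (hs : Summable fun k => B ^ k * (A * P) * Z ^ k)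
    (W : Matrix n n R) :
    (∑' k, B ^ k * A * (P * Z * P⁻¹) ^ k) * (P * W) = ∑' k, B ^ k * (A * P) * Z ^ k * W := by
  simp_rw [pow_mul_mul_conj_pow hP]
  rw [← (hs.mul_right P⁻¹).tsum_mul_right]
  refine tsum_congr fun k => ?_
  rw [mul_assoc _ P⁻¹, ← mul_assoc P⁻¹, nonsing_inv_mul _ ((isUnit_iff_isUnit_det P).mp hP),
    one_mul]

end Matrix

-- Any submultiplicative norm would do: it only serves to make matrices a Banach algebra.
attribute [local instance] Matrix.linftyOpNormedRing Matrix.linftyOpNormedAlgebra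

/-- Lemma 3.2: the summation identity
Σ_h S(T2·T1^h·Z·T1^{−h}·T2^{−1}, A, B)·T2·T1^h·Z^h = S(Z, A·T2·S(Z,I,T1), B),
where all series involved converge and S(Z,A,B) = Σ_h B^h·A·Z^h. -/
theorem statement12 (d : ℕ) (Z A B T1 T2 : Matrix (Fin d) (Fin d) ℂ)
    (hZ : ∀ z ∈ spectrum ℂ Z, ‖z‖ ≤ 1)
    (hB : ∀ z ∈ spectrum ℂ B, ‖z‖ < 1)
    (hT1 : IsUnit T1) (hT2 : IsUnit T2)
    (hT1e : ∀ z ∈ spectrum ℂ T1, ‖z‖ < 1) :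
    (∀ h : ℕ, Summable (fun k : ℕ =>
      B ^ k * A * (T2 * T1 ^ h * Z * (T1⁻¹) ^ h * T2⁻¹) ^ k)) ∧
    Summable (fun h : ℕ => T1 ^ h * (1 : Matrix (Fin d) (Fin d) ℂ) * Z ^ h) ∧
    Summable (fun h : ℕ =>
      (∑' k : ℕ, B ^ k * A * (T2 * T1 ^ h * Z * (T1⁻¹) ^ h * T2⁻¹) ^ k) *
        (T2 * T1 ^ h * Z ^ h)) ∧
    Summable (fun h : ℕ =>
      B ^ h * (A * T2 * ∑' k : ℕ, T1 ^ k * (1 : Matrix (Fin d) (Fin d) ℂ) * Z ^ k) * Z ^ h) ∧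
    (∑' h : ℕ,
      (∑' k : ℕ, B ^ k * A * (T2 * T1 ^ h * Z * (T1⁻¹) ^ h * T2⁻¹) ^ k) *
        (T2 * T1 ^ h * Z ^ h)) =
      ∑' h : ℕ,
        B ^ h * (A * T2 * ∑' k : ℕ, T1 ^ k * (1 : Matrix (Fin d) (Fin d) ℂ) * Z ^ k) * Z ^ h := by
  have hBρ := spectralRadius_lt_one_of_forall_norm_lt hB
  have hT1ρ := spectralRadius_lt_one_of_forall_norm_lt hT1e
  have hZρ := spectralRadius_le_one_of_forall_norm_le hZ
  have hunit (h : ℕ) : IsUnit (T2 * T1 ^ h) := hT2.mul (hT1.pow h)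
  have hconj (h : ℕ) :
      T2 * T1 ^ h * Z * T1⁻¹ ^ h * T2⁻¹ = T2 * T1 ^ h * Z * (T2 * T1 ^ h)⁻¹ := by
    rw [Matrix.mul_inv_rev, Matrix.inv_pow', mul_assoc (T2 * T1 ^ h * Z)]
  have hLHS (h : ℕ) :
      (∑' k, B ^ k * A * (T2 * T1 ^ h * Z * T1⁻¹ ^ h * T2⁻¹) ^ k) * (T2 * T1 ^ h * Z ^ h) =
        ∑' k, B ^ k * (A * T2 * T1 ^ h) * Z ^ k * Z ^ h := by
    rw [hconj, Matrix.tsum_pow_mul_mul_conj_pow_mul (hunit h) (summable_pow_mul_mul_pow hBρ hZρ _)]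
    simp only [mul_assoc]
  refine ⟨fun h => ?_, summable_pow_mul_mul_pow hT1ρ hZρ 1, ?_,
    summable_pow_mul_mul_pow hBρ hZρ _, ?_⟩
  · simp_rw [hconj, Matrix.pow_mul_mul_conj_pow (hunit h)]
    exact (summable_pow_mul_mul_pow hBρ hZρ _).mul_right _
  · simp_rw [hLHS]
    exact (summable_prod_pow_mul_mul_pow_mul_pow hBρ hT1ρ hZρ (A * T2)).prod
  · simp_rw [hLHS, mul_one]
    exact tsum_tsum_pow_mul_mul_pow_mul_pow hBρ hT1ρ hZρ (A * T2)
end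

section
/- The matrix H(s) − Γ1 − Λ is invertible. Moreover, let ψ : ℕ → ℕ → ℝ^{1×2} satisfy: ψ(0,m) = e for all m; for all n ≥ 1 and m ≥ K, ψ(n,m)·(H(s)−Γ1) = ψ(n−1,m)·M + ψ(n,m+1)·Λ; and ψ(n,m+1) = ψ(n,m) for all n ≥ 1 and m ≥ K. Then ψ(n,m) = e·T(s)^n for all n ≥ 0 and m ≥ K, where T(s) = M·(H(s)−Γ1−Λ)^{−1}. -/
noncomputable section

def Lm (lam : ℝ) : Matrix (Fin 2) (Fin 2) ℝ := !![lam, 0; 0, lam]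

def Mm (mu0 mu1 : ℝ) : Matrix (Fin 2) (Fin 2) ℝ := !![mu0, 0; 0, mu1]

def G1m (gam : ℝ) : Matrix (Fin 2) (Fin 2) ℝ := !![0, 0; gam, gam]

def Hm (lam mu0 mu1 gam s : ℝ) : Matrix (Fin 2) (Fin 2) ℝ :=
  (gam + s) • (1 : Matrix (Fin 2) (Fin 2) ℝ) + Lm lam + Mm mu0 mu1

def Tm (lam mu0 mu1 gam s : ℝ) : Matrix (Fin 2) (Fin 2) ℝ :=
  Mm mu0 mu1 * (Hm lam mu0 mu1 gam s - G1m gam - Lm lam)⁻¹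

def eRow : Matrix (Fin 1) (Fin 2) ℝ := !![1, 1]

end

/-!
Λ cancels from `H(s) - Γ₁ - Λ`, leaving a lower triangular matrix with diagonal
`γ + s + μ₀, s + μ₁`, hence invertible. For `m ≥ K` the shift invariance
`ψ(n, m+1) = ψ(n, m)` turns the recursion into `ψ(n+1, m) (H(s) - Γ₁ - Λ) = ψ(n, m) M`,
a first-order linear recursion in `n` solved by `ψ(n, m) = ψ(0, m) T(s)^n`.
-/

namespace Matrix

variable {m n α : Type*} [Fintype n] [DecidableEq n] [CommRing α]

theorem eq_mul_pow_mul_nonsing_inv_of_mul_eq {ψ : ℕ → Matrix m n α} {A B : Matrix n n α}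
    (hA : IsUnit A) (hψ : ∀ k, ψ (k + 1) * A = ψ k * B) (k : ℕ) :
    ψ k = ψ 0 * (B * A⁻¹) ^ k := by
  induction k with
  | zero => simp
  | succ k ih =>
    have hAA : A * A⁻¹ = 1 := mul_nonsing_inv A ((isUnit_iff_isUnit_det A).mp hA)
    calc ψ (k + 1) = ψ (k + 1) * A * A⁻¹ := by rw [Matrix.mul_assoc, hAA, Matrix.mul_one]
      _ = ψ k * (B * A⁻¹) := by rw [hψ, Matrix.mul_assoc]
      _ = ψ 0 * (B * A⁻¹) ^ (k + 1) := by rw [ih, pow_succ, Matrix.mul_assoc]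

end Matrix

theorem Hm_sub_G1m_sub_Lm (lam mu0 mu1 gam s : ℝ) :
    Hm lam mu0 mu1 gam s - G1m gam - Lm lam = !![gam + s + mu0, 0; -gam, s + mu1] := by
  ext i j
  fin_cases i <;> fin_cases j <;> simp [Hm, G1m, Lm, Mm] <;> ring

theorem det_Hm_sub_G1m_sub_Lm (lam mu0 mu1 gam s : ℝ) :
    (Hm lam mu0 mu1 gam s - G1m gam - Lm lam).det = (gam + s + mu0) * (s + mu1) := by
  simp [Hm_sub_G1m_sub_Lm, Matrix.det_fin_two]

theorem isUnit_Hm_sub_G1m_sub_Lm {lam mu0 mu1 gam s : ℝ} (hmu0 : 0 < mu0) (hmu1 : 0 < mu1)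
    (hgam : 0 < gam) (hs : 0 < s) :
    IsUnit (Hm lam mu0 mu1 gam s - G1m gam - Lm lam) := by
  rw [Matrix.isUnit_iff_isUnit_det, det_Hm_sub_G1m_sub_Lm, isUnit_iff_ne_zero]
  positivity

theorem statement14_general (lam mu0 mu1 gam s : ℝ) (K : ℕ)
    (hmu0 : 0 < mu0) (hmu1 : 0 < mu1) (hgam : 0 < gam) (hs : 0 < s) :
    IsUnit (Hm lam mu0 mu1 gam s - G1m gam - Lm lam) ∧
    ∀ ψ : ℕ → ℕ → Matrix (Fin 1) (Fin 2) ℝ,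
      (∀ m, ψ 0 m = eRow) →
      (∀ n m, 1 ≤ n → K ≤ m →
        ψ n m * (Hm lam mu0 mu1 gam s - G1m gam) =
          ψ (n - 1) m * Mm mu0 mu1 + ψ n (m + 1) * Lm lam) →
      (∀ n m, 1 ≤ n → K ≤ m → ψ n (m + 1) = ψ n m) →
      ∀ n m, K ≤ m → ψ n m = eRow * (Tm lam mu0 mu1 gam s) ^ n := by
  have hU := isUnit_Hm_sub_G1m_sub_Lm (lam := lam) hmu0 hmu1 hgam hs
  refine ⟨hU, fun ψ h0 hrec hshift n m hm => ?_⟩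
  have hstep : ∀ k, ψ (k + 1) m * (Hm lam mu0 mu1 gam s - G1m gam - Lm lam) =
      ψ k m * Mm mu0 mu1 := by
    intro k
    have h := hrec (k + 1) m k.succ_pos hm
    rw [hshift (k + 1) m k.succ_pos hm, Nat.add_sub_cancel] at h
    rw [Matrix.mul_sub, h, add_sub_cancel_right]
  rw [Matrix.eq_mul_pow_mul_nonsing_inv_of_mul_eq (ψ := fun k => ψ k m) hU hstep n, h0, Tm]

/-- H(s) − Γ1 − Λ is invertible and above the threshold
ψ(n,m) = e·T(s)^n, where T(s) = M·(H(s) − Γ1 − Λ)⁻¹. -/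
theorem statement14 (lam mu0 mu1 gam s : ℝ) (K : ℕ)
    (hlam : 0 < lam) (hmu0 : 0 < mu0) (hmu1 : 0 < mu1) (hgam : 0 < gam) (hs : 0 < s)
    (hK : 1 ≤ K) :
    IsUnit (Hm lam mu0 mu1 gam s - G1m gam - Lm lam) ∧
    ∀ ψ : ℕ → ℕ → Matrix (Fin 1) (Fin 2) ℝ,
      (∀ m, ψ 0 m = eRow) →
      (∀ n m, 1 ≤ n → K ≤ m →
        ψ n m * (Hm lam mu0 mu1 gam s - G1m gam) =
          ψ (n - 1) m * Mm mu0 mu1 + ψ n (m + 1) * Lm lam) →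
      (∀ n m, 1 ≤ n → K ≤ m → ψ n (m + 1) = ψ n m) →
      ∀ n m, K ≤ m → ψ n m = eRow * (Tm lam mu0 mu1 gam s) ^ n :=
  statement14_general lam mu0 mu1 gam s K hmu0 hmu1 hgam hs
end

section
/- Let ψ be a solution of the vector sojourn-time recursion, and let Z be a 2×2 real matrix whose eigenvalues all have modulus strictly less than 1, with T_M(s) and T_Λ(s) invertible. Then for every m ≥ 0, φ(Z,m) = ψ(K,m)·T_M(s) + φ(T_M(s)·Z·T_M(s)^{−1}, m)·T_M(s)·Z + φ(T_Λ(s)·Z·T_Λ(s)^{−1}, m+1)·T_Λ(s), where all three matrix generating functions converge. -/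
noncomputable section

def G0m (gam : ℝ) : Matrix (Fin 2) (Fin 2) ℝ := !![gam, gam; 0, 0]

def TLm (lam mu0 mu1 gam s : ℝ) : Matrix (Fin 2) (Fin 2) ℝ :=
  Lm lam * (Hm lam mu0 mu1 gam s - G1m gam)⁻¹

def TMm (lam mu0 mu1 gam s : ℝ) : Matrix (Fin 2) (Fin 2) ℝ :=
  Mm mu0 mu1 * (Hm lam mu0 mu1 gam s - G1m gam)⁻¹

/-- The eigenvalues (over ℂ) of a real 2×2 matrix all have modulus strictly less than 1. -/
def SpecLtOne (Z : Matrix (Fin 2) (Fin 2) ℝ) : Prop :=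
  ∀ z ∈ spectrum ℂ (Z.map fun x : ℝ => (x : ℂ)), ‖z‖ < 1

/-- `ψ` is a solution of the vector sojourn-time recursion. -/
def IsVecSol (lam mu0 mu1 gam s : ℝ) (K : ℕ)
    (ψ : ℕ → ℕ → Matrix (Fin 1) (Fin 2) ℝ) : Prop :=
  (∀ m, ψ 0 m = eRow) ∧
  (∀ n m, 1 ≤ n →
    ψ n m * (Hm lam mu0 mu1 gam s - (if K < n + m then G1m gam else G0m gam)) =
      ψ (n - 1) m * Mm mu0 mu1 + ψ n (m + 1) * Lm lam) ∧
  (∀ n m, K ≤ m → ψ n m = eRow * (Tm lam mu0 mu1 gam s) ^ n) ∧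
  (∀ n m i j, 0 ≤ ψ n m i j ∧ ψ n m i j ≤ 1)

end

/-!
For `n ≥ K` the index `n + 1 + m` exceeds `K`, so the recursion at `n + 1` reads
`ψ(n+1,m)(H - Γ₁) = ψ(n,m) M + ψ(n+1,m+1) Λ`, i.e. `ψ(n+1,m) = ψ(n,m) T_M + ψ(n+1,m+1) T_Λ`.
Multiplying by `Z^h` and summing over `h`, the `T_M`-part is the `T_M`-series shifted by one index
and both parts are turned into the conjugated generating functions by `(T Z T⁻¹)^h T = T Z^h`.
All series converge because `ψ` is bounded and, by Gelfand's formula, `‖Z^h‖ ≤ r^h` eventually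
for some `r < 1`.
-/

open Filter in
theorem summable_norm_pow_of_spectralRadius_lt_one {A : Type*} [NormedRing A]
    [NormedAlgebra ℂ A] [CompleteSpace A] {a : A} (ha : spectralRadius ℂ a < 1) :
    Summable fun n : ℕ => ‖a ^ n‖ := by
  obtain ⟨r, hr0, hρr, hr1⟩ := ENNReal.lt_iff_exists_real_btwn.mp ha
  have hr0' : 0 < r := ENNReal.ofReal_pos.mp (zero_le.trans_lt hρr)
  rw [← ENNReal.ofReal_one, ENNReal.ofReal_lt_ofReal_iff one_pos] at hr1
  refine Summable.of_norm_bounded_eventually_nat (summable_geometric_of_lt_one hr0 hr1) ?_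
  filter_upwards [(spectrum.pow_norm_pow_one_div_tendsto_nhds_spectralRadius a).eventually_lt_const
    hρr, eventually_ne_atTop 0] with n hn hn0
  rw [ENNReal.ofReal_lt_ofReal_iff hr0', one_div] at hn
  rw [norm_norm, ← Real.rpow_inv_natCast_pow (norm_nonneg (a ^ n)) hn0]
  exact pow_le_pow_left₀ (by positivity) hn.le n

theorem HasSum.matrix_mul_right {ι l m n R : Type*} [Fintype m] [Ring R] [TopologicalSpace R]
    [IsTopologicalRing R] {f : ι → Matrix l m R} {a : Matrix l m R} (hf : HasSum f a)
    (B : Matrix m n R) : HasSum (fun i => f i * B) (a * B) :=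
  hf.map (mulRightLinearMap l R B) (continuous_id.matrix_mul continuous_const)

namespace Matrix

variable {n R : Type*} [Fintype n] [DecidableEq n] [CommRing R] {T : Matrix n n R}

theorem conj_pow_of_isUnit (hT : IsUnit T) (Z : Matrix n n R) (h : ℕ) :
    (T * Z * T⁻¹) ^ h = T * Z ^ h * T⁻¹ := by
  obtain ⟨u, rfl⟩ := hT
  rw [← coe_units_inv, Units.conj_pow]

theorem conj_pow_mul_of_isUnit (hT : IsUnit T) (Z : Matrix n n R) (h : ℕ) :
    (T * Z * T⁻¹) ^ h * T = T * Z ^ h := by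
  obtain ⟨u, rfl⟩ := hT
  rw [← coe_units_inv, Units.conj_pow, Units.inv_mul_cancel_right]

theorem conj_pow_mul_mul_of_isUnit (hT : IsUnit T) (Z : Matrix n n R) (h : ℕ) :
    (T * Z * T⁻¹) ^ h * (T * Z) = T * Z ^ (h + 1) := by
  rw [← Matrix.mul_assoc, conj_pow_mul_of_isUnit hT, Matrix.mul_assoc, pow_succ]

theorem isUnit_det_of_isUnit_mul_nonsing_inv {A : Matrix n n R} (h : IsUnit (A * T⁻¹)) :
    IsUnit T.det := by
  rw [isUnit_iff_isUnit_det, det_mul] at h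
  exact isUnit_nonsing_inv_det_iff.mp (isUnit_of_mul_isUnit_right h)

end Matrix

section LinftyOpNorm

attribute [local instance] Matrix.linftyOpNormedAddCommGroup Matrix.linftyOpNormedSpace
  Matrix.linftyOpNormedRing Matrix.linftyOpNormedAlgebra

theorem Matrix.linfty_opNorm_le_of_forall_norm_le {m n α : Type*} [Fintype m] [Fintype n]
    [NormedAddCommGroup α] {A : Matrix m n α} {C : ℝ} (hC : 0 ≤ C)
    (hA : ∀ i j, ‖A i j‖ ≤ C) : ‖A‖ ≤ Fintype.card n * C := by
  lift C to NNReal using hC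
  rw [linfty_opNorm_def, ← NNReal.coe_natCast, ← NNReal.coe_mul, NNReal.coe_le_coe]
  exact Finset.sup_le fun i _ =>
    (Finset.sum_le_card_nsmul _ _ _ fun j _ => show ‖A i j‖₊ ≤ C from hA i j).trans_eq
      (nsmul_eq_mul _ _)

theorem Matrix.summable_mul_of_norm_le {l m n : Type*} [Fintype l] [Fintype m] [Fintype n]
    {r : ℕ → Matrix l m ℝ} {A : ℕ → Matrix m n ℝ} {C : ℝ} (hr : ∀ h, ‖r h‖ ≤ C)
    (hA : Summable fun h => ‖A h‖) : Summable fun h => r h * A h := by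
  have := FiniteDimensional.complete ℝ (Matrix l n ℝ)
  exact .of_norm_bounded (hA.mul_left C) fun h =>
    (linfty_opNorm_mul _ _).trans (mul_le_mul_of_nonneg_right (hr h) (norm_nonneg _))

theorem SpecLtOne.summable_norm_pow {Z : Matrix (Fin 2) (Fin 2) ℝ} (hZ : SpecLtOne Z) :
    Summable fun n : ℕ => ‖Z ^ n‖ := by
  set W := Complex.ofRealHom.mapMatrix Z
  have hW : spectralRadius ℂ W < 1 := by
    simpa using spectrum.spectralRadius_lt_of_forall_lt W (r := 1)
      fun z hz => by simpa [← NNReal.coe_lt_coe] using hZ z hz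
  refine (summable_norm_pow_of_spectralRadius_lt_one hW).congr fun n => ?_
  rw [← map_pow]
  simp [Matrix.linfty_opNorm_def]

theorem SpecLtOne.summable_mul_conj_pow {Z T : Matrix (Fin 2) (Fin 2) ℝ} (hZ : SpecLtOne Z)
    (hT : IsUnit T) {r : ℕ → Matrix (Fin 1) (Fin 2) ℝ} {C : ℝ} (hC : 0 ≤ C)
    (hr : ∀ h i j, ‖r h i j‖ ≤ C) : Summable fun h => r h * (T * Z * T⁻¹) ^ h := by
  refine Matrix.summable_mul_of_norm_le
    (fun h => Matrix.linfty_opNorm_le_of_forall_norm_le hC (hr h)) ?_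
  refine .of_nonneg_of_le (fun _ => norm_nonneg _) (fun h => ?_)
    ((hZ.summable_norm_pow.mul_left ‖T‖).mul_right ‖T⁻¹‖)
  rw [Matrix.conj_pow_of_isUnit hT]
  exact (norm_mul_le _ _).trans (mul_le_mul_of_nonneg_right (norm_mul_le _ _) (norm_nonneg _))

end LinftyOpNorm

namespace IsVecSol

variable {lam mu0 mu1 gam s : ℝ} {K : ℕ} {ψ : ℕ → ℕ → Matrix (Fin 1) (Fin 2) ℝ}

theorem norm_apply_le_one (hψ : IsVecSol lam mu0 mu1 gam s K ψ) (n m : ℕ) (i : Fin 1)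
    (j : Fin 2) : ‖ψ n m i j‖ ≤ 1 :=
  abs_le.mpr ⟨by linarith [(hψ.2.2.2 n m i j).1], (hψ.2.2.2 n m i j).2⟩

theorem succ_eq (hψ : IsVecSol lam mu0 mu1 gam s K ψ)
    (hB : IsUnit (Hm lam mu0 mu1 gam s - G1m gam).det) {n : ℕ} (hn : K ≤ n) (m : ℕ) :
    ψ (n + 1) m = ψ n m * TMm lam mu0 mu1 gam s + ψ (n + 1) (m + 1) * TLm lam mu0 mu1 gam s := by
  have hrec := hψ.2.1 (n + 1) m n.succ_pos
  rw [if_pos (by omega), Nat.add_sub_cancel] at hrec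
  rw [TMm, TLm, ← Matrix.mul_assoc, ← Matrix.mul_assoc, ← Matrix.add_mul, ← hrec,
    Matrix.mul_nonsing_inv_cancel_right _ _ hB]

end IsVecSol

theorem statement15_general (lam mu0 mu1 gam s : ℝ) (K : ℕ)
    (ψ : ℕ → ℕ → Matrix (Fin 1) (Fin 2) ℝ)
    (hψ : IsVecSol lam mu0 mu1 gam s K ψ)
    (Z : Matrix (Fin 2) (Fin 2) ℝ)
    (hZ : SpecLtOne Z)
    (hTM : IsUnit (TMm lam mu0 mu1 gam s)) (hTL : IsUnit (TLm lam mu0 mu1 gam s)) :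
    ∀ m : ℕ,
      Summable (fun h : ℕ => ψ (K + h + 1) m * Z ^ h) ∧
      Summable (fun h : ℕ => ψ (K + h + 1) m *
        (TMm lam mu0 mu1 gam s * Z * (TMm lam mu0 mu1 gam s)⁻¹) ^ h) ∧
      Summable (fun h : ℕ => ψ (K + h + 1) (m + 1) *
        (TLm lam mu0 mu1 gam s * Z * (TLm lam mu0 mu1 gam s)⁻¹) ^ h) ∧
      (∑' h : ℕ, ψ (K + h + 1) m * Z ^ h) =
        ψ K m * TMm lam mu0 mu1 gam s +
        (∑' h : ℕ, ψ (K + h + 1) m *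
          (TMm lam mu0 mu1 gam s * Z * (TMm lam mu0 mu1 gam s)⁻¹) ^ h) *
          (TMm lam mu0 mu1 gam s * Z) +
        (∑' h : ℕ, ψ (K + h + 1) (m + 1) *
          (TLm lam mu0 mu1 gam s * Z * (TLm lam mu0 mu1 gam s)⁻¹) ^ h) *
          TLm lam mu0 mu1 gam s := by
  intro m
  set TM := TMm lam mu0 mu1 gam s
  set TL := TLm lam mu0 mu1 gam s
  -- `(H - Γ₁)⁻¹` is `0` unless `H - Γ₁` is invertible, and then `T_M` could not be a unit.
  have hB : IsUnit (Hm lam mu0 mu1 gam s - G1m gam).det :=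
    Matrix.isUnit_det_of_isUnit_mul_nonsing_inv hTM
  have hM := (hZ.summable_mul_conj_pow hTM zero_le_one
    fun h => hψ.norm_apply_le_one (K + h + 1) m).hasSum
  have hL := (hZ.summable_mul_conj_pow hTL zero_le_one
    fun h => hψ.norm_apply_le_one (K + h + 1) (m + 1)).hasSum
  have hTMterm : HasSum (fun h => ψ (K + h) m * TM * Z ^ h)
      (ψ K m * TM + (∑' h, ψ (K + h + 1) m * (TM * Z * TM⁻¹) ^ h) * (TM * Z)) := by
    simpa using HasSum.zero_add (f := fun h => ψ (K + h) m * TM * Z ^ h) <|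
      (hM.matrix_mul_right (TM * Z)).congr_fun fun h => by
        rw [Matrix.mul_assoc _ _ (TM * Z), Matrix.conj_pow_mul_mul_of_isUnit hTM,
          ← Matrix.mul_assoc, add_assoc]
  have hTLterm : HasSum (fun h => ψ (K + h + 1) (m + 1) * TL * Z ^ h)
      ((∑' h, ψ (K + h + 1) (m + 1) * (TL * Z * TL⁻¹) ^ h) * TL) :=
    (hL.matrix_mul_right TL).congr_fun fun h => by
      rw [Matrix.mul_assoc _ _ TL, Matrix.conj_pow_mul_of_isUnit hTL, Matrix.mul_assoc]
  have hφ : HasSum (fun h => ψ (K + h + 1) m * Z ^ h) _ :=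
    (hTMterm.add hTLterm).congr_fun fun h => by
      rw [hψ.succ_eq hB (K.le_add_right h) m, Matrix.add_mul]
  exact ⟨hφ.summable, hM.summable, hL.summable, hφ.tsum_eq⟩

/-- the recursive relation (3.14) for the matrix generating function
φ(Z,m) = Σ_h ψ(K+h+1,m)·Z^h, with all three series convergent. -/
theorem statement15 (lam mu0 mu1 gam s : ℝ) (K : ℕ)
    (hlam : 0 < lam) (hmu0 : 0 < mu0) (hmu1 : 0 < mu1) (hgam : 0 < gam) (hs : 0 < s)
    (hK : 1 ≤ K)
    (ψ : ℕ → ℕ → Matrix (Fin 1) (Fin 2) ℝ)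
    (hψ : IsVecSol lam mu0 mu1 gam s K ψ)
    (Z : Matrix (Fin 2) (Fin 2) ℝ)
    (hZ : SpecLtOne Z)
    (hTM : IsUnit (TMm lam mu0 mu1 gam s)) (hTL : IsUnit (TLm lam mu0 mu1 gam s)) :
    ∀ m : ℕ,
      Summable (fun h : ℕ => ψ (K + h + 1) m * Z ^ h) ∧
      Summable (fun h : ℕ => ψ (K + h + 1) m *
        (TMm lam mu0 mu1 gam s * Z * (TMm lam mu0 mu1 gam s)⁻¹) ^ h) ∧
      Summable (fun h : ℕ => ψ (K + h + 1) (m + 1) *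
        (TLm lam mu0 mu1 gam s * Z * (TLm lam mu0 mu1 gam s)⁻¹) ^ h) ∧
      (∑' h : ℕ, ψ (K + h + 1) m * Z ^ h) =
        ψ K m * TMm lam mu0 mu1 gam s +
        (∑' h : ℕ, ψ (K + h + 1) m *
          (TMm lam mu0 mu1 gam s * Z * (TMm lam mu0 mu1 gam s)⁻¹) ^ h) *
          (TMm lam mu0 mu1 gam s * Z) +
        (∑' h : ℕ, ψ (K + h + 1) (m + 1) *
          (TLm lam mu0 mu1 gam s * Z * (TLm lam mu0 mu1 gam s)⁻¹) ^ h) *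
          TLm lam mu0 mu1 gam s :=
  statement15_general lam mu0 mu1 gam s K ψ hψ Z hZ hTM hTL
end
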